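/- arXiv:1904.03537 — 2 statements merged into one kernel-verified Lean document; each statement's English description precedes it below -/
import Mathlib

section
/- Let E be a real inner product space, let h : E → ℝ be differentiable and σ-strongly convex (σ > 0), g : E → ℝ differentiable, f : E → ℝ, and let α ∈ ℝ, 0 < ε < δ < 1, L ≥ 0, L̄ > 0 with L̄ ≥ −α/((1 − δ)σ), and step sizes 0 < τ ≤ τ' with τ ≤ 1/L̄. Let v ∈ ℝ satisfy f(u) + g(u) ≥ v for all u ∈ E. Let x⁻, x, x⁺, y ∈ E and ξ ∈ E satisfy: (i) f(u) ≥ f(x⁺) + ⟨ξ, u − x⁺⟩ + (α/2)‖u − x⁺‖² for all u ∈ E; (ii) ξ + ∇g(y) + (1/τ)(∇h(x⁺) − ∇h(y)) = 0; (iii) g(x) ≥ g(y) + ⟨∇g(y), x − y⟩ − L·D_h(x, y); (iv) g(x⁺) ≤ g(y) + ⟨∇g(y), x⁺ − y⟩ + L̄·D_h(x⁺, y); (v) (δ − ε)·D_h(x⁻, x) ≥ (1 + L·τ')·D_h(x, y). Then, with Ψ := f + g, the Lyapunov values satisfy τ'·(Ψ(x) − v) + δ·D_h(x⁻, x) ≥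 τ·(Ψ(x⁺) − v) + δ·D_h(x, x⁺) + ε·D_h(x⁻, x). (Lyapunov descent property of CoCaIn BPG.) -/
/-!
The proximal optimality condition (ii) turns the linear terms of the subgradient inequality for
`f` and of the minorant/majorant bounds on `g` into `⟪∇h(x⁺) - ∇h(y), x - x⁺⟫`, which the
three-point identity rewrites as `D_h(x, y) - D_h(x, x⁺) - D_h(x⁺, y)`. This yields
`τ Ψ(x⁺) + D_h(x, x⁺) + (1 - τ L̄) D_h(x⁺, y) + (τ α / 2) ‖x - x⁺‖² ≤ τ Ψ(x) + (1 + τ L) D_h(x, y)`.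
Since `h` is `σ`-strongly convex and `τ α ≥ -(1 - δ) σ`, the share `(1 - δ) D_h(x, x⁺)` absorbs
the curvature defect of `f`; the extrapolation condition (v) then trades `(1 + τ' L) D_h(x, y)`
for `(δ - ε) D_h(x⁻, x)`.
-/

open RealInnerProductSpace

theorem ConvexOn.add_fderiv_sub_le {E : Type*} [NormedAddCommGroup E] [NormedSpace ℝ E]
    {s : Set E} {φ : E → ℝ} {φ' : E →L[ℝ] ℝ} {a b : E}
    (hφ : ConvexOn ℝ s φ) (ha : a ∈ s) (hb : b ∈ s) (hd : HasFDerivAt φ φ' b) :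
    φ b + φ' (a - b) ≤ φ a := by
  set ℓ : ℝ →ᵃ[ℝ] E := AffineMap.lineMap b a
  have hℓ : HasDerivAt ℓ (a - b) 0 := AffineMap.hasDerivAt_lineMap
  have hslope := (hφ.comp_affineMap ℓ).le_slope_of_hasDerivAt (x := 0) (y := 1)
    (by simpa [ℓ]) (by simpa [ℓ]) one_pos (hd.comp_hasDerivAt_of_eq 0 hℓ (by simp [ℓ]))
  simp only [slope_def_field, Function.comp_apply, ℓ, AffineMap.lineMap_apply_zero,
    AffineMap.lineMap_apply_one, sub_zero, div_one] at hslope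
  linarith

section Bregman

variable {E : Type*} [NormedAddCommGroup E] [InnerProductSpace ℝ E]

def bregmanDiv (h : E → ℝ) (h' : E → E) (x y : E) : ℝ :=
  h x - h y - ⟪h' y, x - y⟫

theorem bregmanDiv_three_point (h : E → ℝ) (h' : E → E) (x y z : E) :
    bregmanDiv h h' x y = bregmanDiv h h' x z + bregmanDiv h h' z y + ⟪h' z - h' y, x - z⟫ := by
  have hsplit : x - y = (x - z) + (z - y) := by abel
  simp only [bregmanDiv, hsplit, inner_add_right, inner_sub_left]
  ring

theorem bregmanDiv_sub_half_sq_norm (h : E → ℝ) (h' : E → E) (σ : ℝ) (x y : E) :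
    bregmanDiv (fun z ↦ h z - σ / 2 * ‖z‖ ^ 2) (fun z ↦ h' z - σ • z) x y =
      bregmanDiv h h' x y - σ / 2 * ‖x - y‖ ^ 2 := by
  simp only [bregmanDiv, inner_sub_left, real_inner_smul_left, inner_sub_right,
    norm_sub_sq_real, real_inner_self_eq_norm_sq, real_inner_comm x y]
  ring

theorem ConvexOn.bregmanDiv_nonneg {s : Set E} {h : E → ℝ} {h' : E → E} {x y : E}
    (hc : ConvexOn ℝ s h) (hx : x ∈ s) (hy : y ∈ s)
    (hd : HasFDerivAt h (innerSL ℝ (h' y)) y) : 0 ≤ bregmanDiv h h' x y := by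
  have hfirst := hc.add_fderiv_sub_le hx hy hd
  rw [innerSL_apply_apply] at hfirst
  rw [bregmanDiv]
  linarith

theorem StrongConvexOn.le_bregmanDiv {s : Set E} {σ : ℝ} {h : E → ℝ} {h' : E → E} {x y : E}
    (hsc : StrongConvexOn s σ h) (hx : x ∈ s) (hy : y ∈ s)
    (hd : HasFDerivAt h (innerSL ℝ (h' y)) y) : σ / 2 * ‖x - y‖ ^ 2 ≤ bregmanDiv h h' x y := by
  have hsq := (hasStrictFDerivAt_norm_sq y).hasFDerivAt.const_mul (σ / 2)
  have hd' : HasFDerivAt (fun z ↦ h z - σ / 2 * ‖z‖ ^ 2) (innerSL ℝ (h' y - σ • y)) y := by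
    refine (hd.sub hsq).congr_fderiv ?_
    ext u
    simp only [sub_apply, coe_innerSL_apply, smul_apply, nsmul_eq_mul, Nat.cast_ofNat,
      smul_eq_mul, map_sub, map_smul, sub_right_inj]
    ring
  have hnonneg := (strongConvexOn_iff_convex.mp hsc).bregmanDiv_nonneg
    (h' := fun z ↦ h' z - σ • z) hx hy hd'
  rw [bregmanDiv_sub_half_sq_norm] at hnonneg
  linarith

theorem StrongConvexOn.bregmanDiv_nonneg {s : Set E} {σ : ℝ} {h : E → ℝ} {h' : E → E} {x y : E}
    (hsc : StrongConvexOn s σ h) (hσ : 0 ≤ σ) (hx : x ∈ s) (hy : y ∈ s)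
    (hd : HasFDerivAt h (innerSL ℝ (h' y)) y) : 0 ≤ bregmanDiv h h' x y :=
  (by positivity : 0 ≤ σ / 2 * ‖x - y‖ ^ 2).trans (hsc.le_bregmanDiv hx hy hd)

theorem prox_step_descent {f g h : E → ℝ} {g' h' : E → E} {α L Lbar τ : ℝ} {x xplus y ξ : E}
    (hτ : 0 < τ)
    (hsub : f xplus + ⟪ξ, x - xplus⟫ + α / 2 * ‖x - xplus‖ ^ 2 ≤ f x)
    (hopt : ξ + g' y + (1 / τ) • (h' xplus - h' y) = 0)
    (hlow : g y + ⟪g' y, x - y⟫ - L * bregmanDiv h h' x y ≤ g x)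
    (hup : g xplus ≤ g y + ⟪g' y, xplus - y⟫ + Lbar * bregmanDiv h h' xplus y) :
    τ * (f xplus + g xplus) + bregmanDiv h h' x xplus +
        (1 - τ * Lbar) * bregmanDiv h h' xplus y + τ * α / 2 * ‖x - xplus‖ ^ 2 ≤
      τ * (f x + g x) + (1 + τ * L) * bregmanDiv h h' x y := by
  have hgrad : τ • (ξ + g' y) = -(h' xplus - h' y) := by
    have hscaled := congrArg (τ • ·) hopt
    simp only [smul_add, smul_smul, mul_one_div_cancel hτ.ne', one_smul, smul_zero] at hscaled
    rw [smul_add]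
    exact eq_neg_of_add_eq_zero_left hscaled
  have hinner :
      τ * ⟪ξ, x - xplus⟫ + τ * ⟪g' y, x - xplus⟫ = -⟪h' xplus - h' y, x - xplus⟫ := by
    rw [← inner_neg_left, ← hgrad, real_inner_smul_left, inner_add_left, mul_add]
  have hsplit : τ * ⟪g' y, x - y⟫ = τ * ⟪g' y, x - xplus⟫ + τ * ⟪g' y, xplus - y⟫ := by
    rw [← mul_add, ← inner_add_right, sub_add_sub_cancel]
  have hthree := bregmanDiv_three_point h h' x y xplus
  have hf := mul_le_mul_of_nonneg_left hsub hτ.le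
  have hgx := mul_le_mul_of_nonneg_left hlow hτ.le
  have hgxplus := mul_le_mul_of_nonneg_left hup hτ.le
  linarith

theorem StrongConvexOn.prox_step_sufficient_decrease {f g h : E → ℝ} {g' h' : E → E}
    {σ α δ L Lbar τ : ℝ} {x xplus y ξ : E}
    (hsc : StrongConvexOn Set.univ σ h) (hσ : 0 ≤ σ)
    (hhdiff : ∀ z, HasFDerivAt h (innerSL ℝ (h' z)) z)
    (hδ : δ ≤ 1) (hτ : 0 < τ) (hτLbar : τ * Lbar ≤ 1) (hτα : -((1 - δ) * σ) ≤ τ * α)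
    (hsub : f xplus + ⟪ξ, x - xplus⟫ + α / 2 * ‖x - xplus‖ ^ 2 ≤ f x)
    (hopt : ξ + g' y + (1 / τ) • (h' xplus - h' y) = 0)
    (hlow : g y + ⟪g' y, x - y⟫ - L * bregmanDiv h h' x y ≤ g x)
    (hup : g xplus ≤ g y + ⟪g' y, xplus - y⟫ + Lbar * bregmanDiv h h' xplus y) :
    τ * (f xplus + g xplus) + δ * bregmanDiv h h' x xplus ≤
      τ * (f x + g x) + (1 + τ * L) * bregmanDiv h h' x y := by
  have hdescent := prox_step_descent hτ hsub hopt hlow hup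
  have hDxplus := hsc.le_bregmanDiv (x := x) trivial trivial (hhdiff xplus)
  have hDy := hsc.bregmanDiv_nonneg (x := xplus) hσ trivial trivial (hhdiff y)
  have hmajorant : 0 ≤ (1 - τ * Lbar) * bregmanDiv h h' xplus y := mul_nonneg (by linarith) hDy
  have habsorb : 0 ≤ ((1 - δ) * σ + τ * α) * ‖x - xplus‖ ^ 2 :=
    mul_nonneg (by linarith) (by positivity)
  have hstrong := mul_le_mul_of_nonneg_left hDxplus (sub_nonneg.2 hδ)
  linarith

end Bregman

theorem lyapunov_descent_cocain_general
    {E : Type*} [NormedAddCommGroup E] [InnerProductSpace ℝ E]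
    (f g h : E → ℝ) (g' h' : E → E) (σ : ℝ) (hσ : 0 < σ)
    (hsc : StrongConvexOn Set.univ σ h)
    (hhdiff : ∀ z, HasFDerivAt h (innerSL ℝ (h' z)) z)
    (α ε δ L Lbar τ τ' v : ℝ)
    (hδ : δ < 1)
    (hL : 0 ≤ L) (hLbar : 0 < Lbar) (hLbarα : Lbar ≥ -α / ((1 - δ) * σ))
    (hτ : 0 < τ) (hττ' : τ ≤ τ') (hτLbar : τ ≤ 1 / Lbar)
    (hv : ∀ u : E, f u + g u ≥ v)
    (xminus x xplus y ξ : E)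
    (hsub : ∀ u : E, f u ≥ f xplus + ⟪ξ, u - xplus⟫ + (α / 2) * ‖u - xplus‖ ^ 2)
    (hopt : ξ + g' y + (1 / τ) • (h' xplus - h' y) = 0)
    (hlow : g x ≥ g y + ⟪g' y, x - y⟫ - L * (h x - h y - ⟪h' y, x - y⟫))
    (hup : g xplus ≤ g y + ⟪g' y, xplus - y⟫ +
      Lbar * (h xplus - h y - ⟪h' y, xplus - y⟫))
    (hextra : (δ - ε) * (h xminus - h x - ⟪h' x, xminus - x⟫) ≥
      (1 + L * τ') * (h x - h y - ⟪h' y, x - y⟫)) :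
    τ' * (f x + g x - v) + δ * (h xminus - h x - ⟪h' x, xminus - x⟫) ≥
      τ * (f xplus + g xplus - v) + δ * (h x - h xplus - ⟪h' xplus, x - xplus⟫) +
      ε * (h xminus - h x - ⟪h' x, xminus - x⟫) := by
  have hτLbar' : τ * Lbar ≤ 1 := (le_div_iff₀ hLbar).mp hτLbar
  have hτα : -((1 - δ) * σ) ≤ τ * α := by
    have hc : 0 < (1 - δ) * σ := mul_pos (sub_pos.2 hδ) hσ
    have hLbarα' : -α ≤ Lbar * ((1 - δ) * σ) := (div_le_iff₀ hc).mp hLbarα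
    nlinarith [mul_le_mul_of_nonneg_left hLbarα' hτ.le, mul_le_mul_of_nonneg_right hτLbar' hc.le]
  have hdecrease : τ * (f xplus + g xplus) + δ * bregmanDiv h h' x xplus ≤
      τ * (f x + g x) + (1 + τ * L) * bregmanDiv h h' x y :=
    hsc.prox_step_sufficient_decrease hσ.le hhdiff hδ.le hτ hτLbar' hτα (hsub x) hopt hlow hup
  have hDy := hsc.bregmanDiv_nonneg (x := x) hσ.le trivial trivial (hhdiff y)
  have hstep : (1 + τ * L) * bregmanDiv h h' x y ≤ (1 + L * τ') * bregmanDiv h h' x y :=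
    mul_le_mul_of_nonneg_right (by nlinarith) hDy
  have hgap := mul_le_mul_of_nonneg_right hττ' (sub_nonneg.2 (hv x))
  simp only [bregmanDiv] at hdecrease hstep
  linarith

/-- Lyapunov descent property of CoCaIn BPG: with `h` σ-strongly convex and
differentiable, `0 < ε < δ < 1`, `L ≥ 0`, `L̄ ≥ -α/((1-δ)σ)`, step sizes
`0 < τ ≤ τ'` with `τ ≤ 1/L̄`, and `v` a lower bound of `Ψ = f + g`, if the
subgradient inequality (i), the proximal optimality condition (ii), the
minorant (iii) and majorant (iv) inequalities, and the extrapolation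
condition (v) hold, then
`τ'(Ψ(x) - v) + δ·D_h(x⁻, x) ≥ τ(Ψ(x⁺) - v) + δ·D_h(x, x⁺) + ε·D_h(x⁻, x)`,
where `D_h(x, y) = h x - h y - ⟪∇h y, x - y⟫`. -/
theorem lyapunov_descent_cocain
    {E : Type*} [NormedAddCommGroup E] [InnerProductSpace ℝ E]
    (f g h : E → ℝ) (g' h' : E → E) (σ : ℝ) (hσ : 0 < σ)
    (hsc : StrongConvexOn Set.univ σ h)
    (hhdiff : ∀ z, HasFDerivAt h (innerSL ℝ (h' z)) z)
    (hgdiff : ∀ z, HasFDerivAt g (innerSL ℝ (g' z)) z)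
    (α ε δ L Lbar τ τ' v : ℝ)
    (hε : 0 < ε) (hεδ : ε < δ) (hδ : δ < 1)
    (hL : 0 ≤ L) (hLbar : 0 < Lbar) (hLbarα : Lbar ≥ -α / ((1 - δ) * σ))
    (hτ : 0 < τ) (hττ' : τ ≤ τ') (hτLbar : τ ≤ 1 / Lbar)
    (hv : ∀ u : E, f u + g u ≥ v)
    (xminus x xplus y ξ : E)
    (hsub : ∀ u : E, f u ≥ f xplus + ⟪ξ, u - xplus⟫ + (α / 2) * ‖u - xplus‖ ^ 2)
    (hopt : ξ + g' y + (1 / τ) • (h' xplus - h' y) = 0)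
    (hlow : g x ≥ g y + ⟪g' y, x - y⟫ - L * (h x - h y - ⟪h' y, x - y⟫))
    (hup : g xplus ≤ g y + ⟪g' y, xplus - y⟫ +
      Lbar * (h xplus - h y - ⟪h' y, xplus - y⟫))
    (hextra : (δ - ε) * (h xminus - h x - ⟪h' x, xminus - x⟫) ≥
      (1 + L * τ') * (h x - h y - ⟪h' y, x - y⟫)) :
    τ' * (f x + g x - v) + δ * (h xminus - h x - ⟪h' x, xminus - x⟫) ≥
      τ * (f xplus + g xplus - v) + δ * (h x - h xplus - ⟪h' xplus, x - xplus⟫) +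
      ε * (h xminus - h x - ⟪h' x, xminus - x⟫) :=
  lyapunov_descent_cocain_general f g h g' h' σ hσ hsc hhdiff α ε δ L Lbar τ τ' v hδ hL hLbar hLbarα
    hτ hττ' hτLbar hv xminus x xplus y ξ hsub hopt hlow hup hextra
end

section
/- Let E be a real inner product space, let h : E → ℝ be convex and continuously differentiable (with continuous gradient ∇h), let g : E → ℝ be continuously differentiable (with continuous gradient ∇g), let f : E → ℝ, and let τ > 0. Let (x^k)_{k≥1} and (y^k)_{k≥0} be sequences in E such that for every k ≥ 1, x^k minimizes u ↦ f(u) + ⟨∇g(y^{k−1}), u − y^{k−1}⟩ + (1/τ)·D_h(u, y^{k−1}) over E. If x* ∈ E and (n_k) is a strictly increasing sequence of indices with x^{n_k} → x* and y^{n_k − 1} → x*, then limsup_{k→∞} f(x^{n_k}) ≤ f(x*), and consequently limsup_{k→∞} (f + g)(x^{n_k}) ≤ (f + g)(x*). (Continuity condition for CoCaIn BPG.) -/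
open RealInnerProductSpace Filter Topology

/-!
Testing the minimality of `x^k` against the competitor `x*` bounds `f(x^k)` above by `f(x*)`
plus the difference of the continuous part `ψ(y, u) = ⟪∇g(y), u - y⟫ + D_h(u, y) / τ` of the
model at `u = x*` and at `u = x^k`; along the subsequence this difference tends to `0`.
Applying the same argument to `f + g` with `ψ - g` in place of `ψ` gives the second claim.
-/

def bregman {E : Type*} [NormedAddCommGroup E] [InnerProductSpace ℝ E]
    (h : E → ℝ) (h' : E → E) (x y : E) : ℝ :=
  h x - h y - ⟪h' y, x - y⟫

theorem continuous_bregman {E : Type*} [NormedAddCommGroup E] [InnerProductSpace ℝ E]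
    {h : E → ℝ} {h' : E → E} (hh : Continuous h) (hh' : Continuous h') :
    Continuous fun p : E × E => bregman h h' p.1 p.2 := by
  unfold bregman
  fun_prop

section Minimizers

variable {ι α β : Type*} [TopologicalSpace α] {l : Filter ι}
  {f : α → ℝ} {ψ : β → α → ℝ} {x : ι → α} {y : ι → β} {a : α} {b : β}

/-- Comparing with a fixed index `j`: `f (x i) ≥ f (x j) + ψ (y j) (x j) - ψ (y j) (x i)`. -/
theorem isCoboundedUnder_le_of_minimizer [l.NeBot] (hψ : ∀ b, Continuous (ψ b))
    (hmin : ∀ i u, f (x i) + ψ (y i) (x i) ≤ f u + ψ (y i) u) (hx : Tendsto x l (𝓝 a)) :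
    IsCoboundedUnder (· ≤ ·) l (f ∘ x) := by
  obtain ⟨j⟩ : Nonempty ι := l.nonempty_of_neBot
  set c := f (x j) + ψ (y j) (x j)
  have hlim : Tendsto (fun i => c - ψ (y j) (x i)) l (𝓝 (c - ψ (y j) a)) :=
    tendsto_const_nhds.sub (((hψ (y j)).tendsto a).comp hx)
  refine isCoboundedUnder_le_of_eventually_le l (x := c - ψ (y j) a - 1) ?_
  filter_upwards [hlim.eventually (eventually_ge_nhds (sub_one_lt _))] with i hi
  have := hmin j (x i)
  simp only [Function.comp_apply]
  linarith

theorem limsup_le_of_tendsto_minimizer [TopologicalSpace β] [l.NeBot]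
    (hψ : Continuous (Function.uncurry ψ))
    (hmin : ∀ i u, f (x i) + ψ (y i) (x i) ≤ f u + ψ (y i) u)
    (hx : Tendsto x l (𝓝 a)) (hy : Tendsto y l (𝓝 b)) :
    limsup (f ∘ x) l ≤ f a := by
  have hub : ∀ i, f (x i) ≤ f a + (ψ (y i) a - ψ (y i) (x i)) := fun i => by
    linarith [hmin i a]
  have hgap : Tendsto (fun i => ψ (y i) a - ψ (y i) (x i)) l (𝓝 0) := by
    have hψy : Tendsto (fun i => ψ (y i) a) l (𝓝 (ψ b a)) :=
      (hψ.tendsto (b, a)).comp (hy.prodMk_nhds tendsto_const_nhds)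
    have hψyx : Tendsto (fun i => ψ (y i) (x i)) l (𝓝 (ψ b a)) :=
      (hψ.tendsto (b, a)).comp (hy.prodMk_nhds hx)
    simpa using hψy.sub hψyx
  have hbound : Tendsto (fun i => f a + (ψ (y i) a - ψ (y i) (x i))) l (𝓝 (f a)) := by
    simpa using tendsto_const_nhds.add hgap
  calc limsup (f ∘ x) l
      ≤ limsup (fun i => f a + (ψ (y i) a - ψ (y i) (x i))) l :=
        limsup_le_limsup (Eventually.of_forall hub)
          (isCoboundedUnder_le_of_minimizer (fun b => hψ.comp (.prodMk_right b)) hmin hx)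
          hbound.isBoundedUnder_le
    _ = f a := hbound.limsup_eq

end Minimizers

theorem continuity_condition_cocain_general
    {E : Type*} [NormedAddCommGroup E] [InnerProductSpace ℝ E]
    (f g h : E → ℝ) (g' h' : E → E)
    (hhdiff : ∀ z, HasFDerivAt h (innerSL ℝ (h' z)) z) (hh'cont : Continuous h')
    (hgdiff : ∀ z, HasFDerivAt g (innerSL ℝ (g' z)) z) (hg'cont : Continuous g')
    (τ : ℝ)
    (x y : ℕ → E)
    (hmin : ∀ k, 1 ≤ k → ∀ u : E,
      f (x k) + ⟪g' (y (k - 1)), x k - y (k - 1)⟫ +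
        (1 / τ) * (h (x k) - h (y (k - 1)) - ⟪h' (y (k - 1)), x k - y (k - 1)⟫) ≤
      f u + ⟪g' (y (k - 1)), u - y (k - 1)⟫ +
        (1 / τ) * (h u - h (y (k - 1)) - ⟪h' (y (k - 1)), u - y (k - 1)⟫))
    (xstar : E) (n : ℕ → ℕ) (hn1 : ∀ k, 1 ≤ n k)
    (hx : Filter.Tendsto (fun k => x (n k)) Filter.atTop (nhds xstar))
    (hy : Filter.Tendsto (fun k => y (n k - 1)) Filter.atTop (nhds xstar)) :
    Filter.limsup (fun k => f (x (n k))) Filter.atTop ≤ f xstar ∧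
    Filter.limsup (fun k => f (x (n k)) + g (x (n k))) Filter.atTop ≤
      f xstar + g xstar := by
  have hhc : Continuous h := Differentiable.continuous fun z => (hhdiff z).differentiableAt
  have hgc : Continuous g := Differentiable.continuous fun z => (hgdiff z).differentiableAt
  set ψ : E → E → ℝ := fun v u => ⟪g' v, u - v⟫ + (1 / τ) * bregman h h' u v
  have hψ : Continuous (Function.uncurry ψ) := by
    have := (continuous_bregman hhc hh'cont).comp continuous_swap
    simp only [ψ, Function.uncurry_def]
    fun_prop
  have hmin' : ∀ k u, f (x (n k)) + ψ (y (n k - 1)) (x (n k)) ≤ f u + ψ (y (n k - 1)) u :=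
    fun k u => by simpa only [ψ, bregman, add_assoc] using hmin (n k) (hn1 k) u
  refine ⟨limsup_le_of_tendsto_minimizer hψ hmin' hx hy, ?_⟩
  refine limsup_le_of_tendsto_minimizer (f := f + g) (ψ := fun v u => ψ v u - g u)
    (by fun_prop) (fun k u => ?_) hx hy
  simp only [Pi.add_apply]
  linarith [hmin' k u]

/-- Continuity condition for CoCaIn BPG: if for every `k ≥ 1` the iterate `x^k`
minimizes `u ↦ f(u) + ⟪∇g(y^{k-1}), u - y^{k-1}⟫ + (1/τ)·D_h(u, y^{k-1})` over `E`
(with `h` convex and continuously differentiable, `g` continuously differentiable),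
and `x^{n_k} → x*`, `y^{n_k - 1} → x*` along a strictly increasing sequence of
indices `n_k ≥ 1`, then `limsup f(x^{n_k}) ≤ f(x*)` and consequently
`limsup (f + g)(x^{n_k}) ≤ (f + g)(x*)`. -/
theorem continuity_condition_cocain
    {E : Type*} [NormedAddCommGroup E] [InnerProductSpace ℝ E]
    (f g h : E → ℝ) (g' h' : E → E)
    (hconv : ConvexOn ℝ Set.univ h)
    (hhdiff : ∀ z, HasFDerivAt h (innerSL ℝ (h' z)) z) (hh'cont : Continuous h')
    (hgdiff : ∀ z, HasFDerivAt g (innerSL ℝ (g' z)) z) (hg'cont : Continuous g')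
    (τ : ℝ) (hτ : 0 < τ)
    (x y : ℕ → E)
    (hmin : ∀ k, 1 ≤ k → ∀ u : E,
      f (x k) + ⟪g' (y (k - 1)), x k - y (k - 1)⟫ +
        (1 / τ) * (h (x k) - h (y (k - 1)) - ⟪h' (y (k - 1)), x k - y (k - 1)⟫) ≤
      f u + ⟪g' (y (k - 1)), u - y (k - 1)⟫ +
        (1 / τ) * (h u - h (y (k - 1)) - ⟪h' (y (k - 1)), u - y (k - 1)⟫))
    (xstar : E) (n : ℕ → ℕ) (hn : StrictMono n) (hn1 : ∀ k, 1 ≤ n k)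
    (hx : Filter.Tendsto (fun k => x (n k)) Filter.atTop (nhds xstar))
    (hy : Filter.Tendsto (fun k => y (n k - 1)) Filter.atTop (nhds xstar)) :
    Filter.limsup (fun k => f (x (n k))) Filter.atTop ≤ f xstar ∧
    Filter.limsup (fun k => f (x (n k)) + g (x (n k))) Filter.atTop ≤
      f xstar + g xstar :=
  continuity_condition_cocain_general f g h g' h' hhdiff hh'cont hgdiff hg'cont τ x y hmin xstar n
    hn1 hx hy
end
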